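/- arXiv:2011.02039 — 2 statements merged into one kernel-verified Lean document; each statement's English description precedes it below -/
import Mathlib

section
/- For every x ∈ (0,1]: if u_{g_1(x)} > 0 then r_{g_1(x)} < f(x) ≤ r_{g_1(x)−1}, and if u_{g_1(x)} ≤ 0 then r_{g_1(x)−1} ≤ f(x) ≤ r_{g_1(x)} (with r_{−1} = 1). -/
/-!
Writing `t` for the value of the series on the shifted digit sequence `(g₂, g₃, …)`, we have
`f x = r_{g₁} + u_{g₁} t`, a point of the segment from `r_{g₁}` to `r_{g₁} + u_{g₁} = r_{g₁-1}`
once `t ∈ (0, 1]`. This holds for every digit sequence: since `r_n` and `r_{n-1}` both lie in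
`(0, 1]`, each map `t ↦ r_n + u_n t` sends `[0, 1]` into `(0, 1]`, so the partial sums stay in
`(0, 1]`, the limit lies in `[0, 1]`, and one more step of the recursion puts it in `(0, 1]`.
The series converges because `u_n → 0` with `|u_n| < 1` forces `sup |u_n| < 1`.
-/

open scoped BigOperators

/-- The value `Δ^E_g` of the Engel series with digit sequence `g`
(`g n` is the paper's `g_{n+1}`). -/
noncomputable def engelSum (g : ℕ → ℕ) : ℝ :=
  ∑' n : ℕ, ∏ k ∈ Finset.range (n + 1),
    ((2 : ℝ) + ∑ i ∈ Finset.range (k + 1), (g i : ℝ))⁻¹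

/-- The value of the series `r_{g_1} + ∑_{k≥2} r_{g_k} ∏_{i=1}^{k-1} u_{g_i}`
defining `f` on the digit sequence `g`. -/
noncomputable def fSeries (u r : ℕ → ℝ) (g : ℕ → ℕ) : ℝ :=
  r (g 0) + ∑' k : ℕ, r (g (k + 1)) * ∏ i ∈ Finset.range (k + 1), u (g i)

/-- `rpred r n = r (n-1)`, with the convention `r (-1) = 1`. -/
noncomputable def rpred (r : ℕ → ℝ) (n : ℕ) : ℝ := if n = 0 then 1 else r (n - 1)

open Filter Topology Finset

lemma exists_lt_one_forall_norm_le {E : Type*} [SeminormedAddGroup E] {v : ℕ → E}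
    (hv0 : Tendsto v atTop (𝓝 0)) (hv : ∀ n, ‖v n‖ < 1) : ∃ c < 1, ∀ n, ‖v n‖ ≤ c := by
  obtain ⟨N, hN⟩ := eventually_atTop.1 <|
    (tendsto_norm_zero.comp hv0).eventually (gt_mem_nhds (show (0 : ℝ) < 1 / 2 by norm_num))
  obtain ⟨m, -, hm⟩ := (range (N + 1)).exists_max_image (‖v ·‖) nonempty_range_add_one
  refine ⟨max (1 / 2) ‖v m‖, max_lt (by norm_num) (hv m), fun n => ?_⟩
  rcases le_or_gt n N with hn | hn
  · exact (hm n (mem_range_succ_iff.2 hn)).trans (le_max_right _ _)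
  · exact (hN n hn.le).le.trans (le_max_left _ _)

section

variable {u r : ℕ → ℝ}

noncomputable def fTerm (u r : ℕ → ℝ) (g : ℕ → ℕ) (k : ℕ) : ℝ :=
  r (g (k + 1)) * ∏ i ∈ range (k + 1), u (g i)

noncomputable def fPartial (u r : ℕ → ℝ) (g : ℕ → ℕ) (N : ℕ) : ℝ :=
  r (g 0) + ∑ k ∈ range N, fTerm u r g k

lemma fSeries_eq_add_tsum_fTerm (g : ℕ → ℕ) : fSeries u r g = r (g 0) + ∑' k, fTerm u r g k :=
  rfl

lemma fTerm_succ (g : ℕ → ℕ) (k : ℕ) :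
    fTerm u r g (k + 1) = u (g 0) * fTerm u r (fun n => g (n + 1)) k := by
  rw [fTerm, fTerm, prod_range_succ']
  ring

lemma summable_fTerm {c B : ℝ} (hc : c < 1) (hu : ∀ n, |u n| ≤ c) (hr : ∀ n, |r n| ≤ B)
    (g : ℕ → ℕ) : Summable (fTerm u r g) := by
  have hc0 : 0 ≤ c := (abs_nonneg _).trans (hu 0)
  refine Summable.of_norm_bounded
    (((summable_geometric_of_lt_one hc0 hc).mul_left c).mul_left B) fun k => ?_
  calc ‖fTerm u r g k‖ = |r (g (k + 1))| * ∏ i ∈ range (k + 1), |u (g i)| := by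
        rw [fTerm, Real.norm_eq_abs, abs_mul, abs_prod]
    _ ≤ B * ∏ _i ∈ range (k + 1), c := by
        gcongr with i
        · exact (abs_nonneg _).trans (hr 0)
        · exact hr _
        · exact hu _
    _ = B * (c * c ^ k) := by rw [prod_const, card_range, pow_succ']

lemma fSeries_eq_add_mul {g : ℕ → ℕ} (hg : Summable (fTerm u r g)) :
    fSeries u r g = r (g 0) + u (g 0) * fSeries u r (fun n => g (n + 1)) := by
  simp only [fSeries_eq_add_tsum_fTerm]
  rw [hg.tsum_eq_zero_add, mul_add, ← tsum_mul_left]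
  simp only [fTerm_succ]
  rw [fTerm, zero_add, prod_range_one]
  ring

lemma fPartial_succ (g : ℕ → ℕ) (N : ℕ) :
    fPartial u r g (N + 1) = r (g 0) + u (g 0) * fPartial u r (fun n => g (n + 1)) N := by
  rw [fPartial, sum_range_succ', fPartial, mul_add, mul_sum]
  simp only [fTerm_succ]
  rw [fTerm, zero_add, prod_range_one]
  ring

lemma tendsto_fPartial {g : ℕ → ℕ} (hg : Summable (fTerm u r g)) :
    Tendsto (fPartial u r g) atTop (𝓝 (fSeries u r g)) :=
  hg.hasSum.tendsto_sum_nat.const_add _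

lemma fPartial_mem_Ioc (hr : ∀ n, r n ∈ Set.Ioc 0 1) (hru : ∀ n, r n + u n ∈ Set.Ioc 0 1)
    (N : ℕ) (g : ℕ → ℕ) : fPartial u r g N ∈ Set.Ioc 0 1 := by
  induction N generalizing g with
  | zero => simpa [fPartial] using hr (g 0)
  | succ N ih =>
    rw [fPartial_succ, mul_comm, ← smul_eq_mul]
    exact (convex_Ioc 0 1).add_smul_mem (hr _) (hru _) (Set.Ioc_subset_Icc_self (ih _))

lemma fSeries_mem_Ioc (hr : ∀ n, r n ∈ Set.Ioc 0 1) (hru : ∀ n, r n + u n ∈ Set.Ioc 0 1)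
    (hsum : ∀ g, Summable (fTerm u r g)) (g : ℕ → ℕ) : fSeries u r g ∈ Set.Ioc 0 1 := by
  have hIcc (g : ℕ → ℕ) : fSeries u r g ∈ Set.Icc 0 1 :=
    isClosed_Icc.mem_of_tendsto (tendsto_fPartial (hsum g))
      (Eventually.of_forall fun N => Set.Ioc_subset_Icc_self (fPartial_mem_Ioc hr hru N g))
  rw [fSeries_eq_add_mul (hsum g), mul_comm, ← smul_eq_mul]
  exact (convex_Ioc 0 1).add_smul_mem (hr _) (hru _) (hIcc _)

lemma add_eq_rpred (hr : ∀ n, r n = 1 - ∑ i ∈ range (n + 1), u i) (n : ℕ) :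
    r n + u n = rpred r n := by
  cases n with
  | zero => simp [rpred, hr 0]
  | succ n =>
    rw [rpred, if_neg n.succ_ne_zero, Nat.add_sub_cancel, hr, hr, sum_range_succ _ (n + 1)]
    ring

lemma rpred_mem_Ioc (hr : ∀ n, r n ∈ Set.Ioo 0 1) (n : ℕ) : rpred r n ∈ Set.Ioc 0 1 := by
  cases n with
  | zero => simp [rpred]
  | succ n => exact Set.Ioo_subset_Ioc_self (hr n)

end

theorem stmt4_general
    (u r : ℕ → ℝ)
    (hu_sum : HasSum u 1)
    (hu_abs : ∀ n, |u n| < 1)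
    (hr : ∀ n, r n = 1 - ∑ i ∈ Finset.range (n + 1), u i)
    (hr01 : ∀ n, 0 < r n ∧ r n < 1)
    (G : ℝ → ℕ → ℕ)
    (f : ℝ → ℝ)
    (hf : ∀ x ∈ Set.Ioc (0:ℝ) 1, f x = fSeries u r (G x)) :
    ∀ x ∈ Set.Ioc (0:ℝ) 1,
      (0 < u (G x 0) → r (G x 0) < f x ∧ f x ≤ rpred r (G x 0)) ∧
      (u (G x 0) ≤ 0 → rpred r (G x 0) ≤ f x ∧ f x ≤ r (G x 0)) := by
  intro x hx
  obtain ⟨c, hc, hu⟩ :=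
    exists_lt_one_forall_norm_le hu_sum.summable.tendsto_atTop_zero (by simpa using hu_abs)
  have hsum (g : ℕ → ℕ) : Summable (fTerm u r g) :=
    summable_fTerm hc (by simpa using hu)
      (fun n => (abs_of_pos (hr01 n).1).trans_le (hr01 n).2.le) g
  have ht : fSeries u r (fun n => G x (n + 1)) ∈ Set.Ioc 0 1 :=
    fSeries_mem_Ioc (fun n => Set.Ioo_subset_Ioc_self (hr01 n))
      (fun n => add_eq_rpred hr n ▸ rpred_mem_Ioc hr01 n) hsum _
  rw [hf x hx, fSeries_eq_add_mul (hsum _), ← add_eq_rpred hr]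
  refine ⟨fun hpos => ⟨?_, ?_⟩, fun hneg => ⟨?_, ?_⟩⟩
  · exact lt_add_of_pos_right _ (mul_pos hpos ht.1)
  · exact (add_le_add_iff_left _).2 (mul_le_of_le_one_right hpos.le ht.2)
  · exact (add_le_add_iff_left _).2 (by simpa using mul_le_mul_of_nonpos_left ht.2 hneg)
  · exact add_le_of_nonpos_right (mul_nonpos_of_nonpos_of_nonneg hneg ht.1.le)

/-- if u_{g₁(x)} > 0 then r_{g₁(x)} < f(x) ≤ r_{g₁(x)-1};
if u_{g₁(x)} ≤ 0 then r_{g₁(x)-1} ≤ f(x) ≤ r_{g₁(x)} (with r_{-1} = 1). -/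
theorem stmt4
    (u r : ℕ → ℝ)
    (hu_sum : HasSum u 1)
    (hu_abs : ∀ n, |u n| < 1)
    (hr : ∀ n, r n = 1 - ∑ i ∈ Finset.range (n + 1), u i)
    (hr01 : ∀ n, 0 < r n ∧ r n < 1)
    (G : ℝ → ℕ → ℕ)
    (hG : ∀ x ∈ Set.Ioc (0:ℝ) 1, engelSum (G x) = x)
    (hGuniq : ∀ x ∈ Set.Ioc (0:ℝ) 1, ∀ g : ℕ → ℕ, engelSum g = x → g = G x)
    (f : ℝ → ℝ)
    (hf : ∀ x ∈ Set.Ioc (0:ℝ) 1, f x = fSeries u r (G x))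
    (hf0 : f 0 = 0) :
    ∀ x ∈ Set.Ioc (0:ℝ) 1,
      (0 < u (G x 0) → r (G x 0) < f x ∧ f x ≤ rpred r (G x 0)) ∧
      (u (G x 0) ≤ 0 → rpred r (G x 0) ≤ f x ∧ f x ≤ r (G x 0)) :=
  stmt4_general u r hu_sum hu_abs hr hr01 G f hf
end

section
/- The range of the function f on [0,1] (with f(0) = 0) is exactly the closed interval [0, 1]. -/
/-!
Write `φₙ t = rₙ + uₙ t`. Since `uₙ = rₙ₋₁ - rₙ`, `φₙ t = (1 - t) rₙ + t rₙ₋₁` maps `[0, 1]` into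
itself, and `f` at the point with E-digits `g` is the limit of `φ_{g₀} ∘ ⋯ ∘ φ_{g_{k-1}}` applied to
any bounded sequence, the error being `O(cᵏ)` with `c = sup |uₙ| < 1`; so `f` takes values in
`[0, 1]`. Conversely, for `y ∈ (0, 1]` the least `n` with `rₙ < y` puts `y` in
`(rₙ, rₙ₋₁] = φₙ (0, 1]`; iterating gives digits `g` and `yₖ ∈ (0, 1]` with
`y = φ_{g₀} ∘ ⋯ ∘ φ_{g_{k-1}} (yₖ)` for every `k`, hence `y = f x` for the `x` whose
E-representation is `g`.
-/

open scoped BigOperators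

open Filter Topology Set

lemma engel_factor_mem_Ioc (g : ℕ → ℕ) (k : ℕ) :
    ((2 : ℝ) + ∑ i ∈ Finset.range (k + 1), (g i : ℝ))⁻¹ ∈ Ioc 0 (1 / 2) := by
  refine ⟨by positivity, ?_⟩
  rw [one_div]
  exact inv_anti₀ two_pos (le_add_of_nonneg_right (by positivity))

lemma engel_term_pos (g : ℕ → ℕ) (n : ℕ) :
    0 < ∏ k ∈ Finset.range (n + 1), ((2 : ℝ) + ∑ i ∈ Finset.range (k + 1), (g i : ℝ))⁻¹ :=
  Finset.prod_pos fun k _ => (engel_factor_mem_Ioc g k).1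

lemma engel_term_le (g : ℕ → ℕ) (n : ℕ) :
    ∏ k ∈ Finset.range (n + 1), ((2 : ℝ) + ∑ i ∈ Finset.range (k + 1), (g i : ℝ))⁻¹
      ≤ 1 / 2 * (1 / 2) ^ n := by
  calc _ ≤ ∏ _k ∈ Finset.range (n + 1), (1 / 2 : ℝ) :=
        Finset.prod_le_prod (fun k _ => (engel_factor_mem_Ioc g k).1.le)
          fun k _ => (engel_factor_mem_Ioc g k).2
    _ = 1 / 2 * (1 / 2) ^ n := by rw [Finset.prod_const, Finset.card_range, pow_succ']

lemma engelSum_mem_Ioc (g : ℕ → ℕ) : engelSum g ∈ Ioc 0 1 := by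
  have hgeom : HasSum (fun n : ℕ => 1 / 2 * (1 / 2 : ℝ) ^ n) 1 := by
    simpa using hasSum_geometric_two.mul_left (1 / 2 : ℝ)
  have hsum := hgeom.summable.of_nonneg_of_le (fun n => (engel_term_pos g n).le) (engel_term_le g)
  exact ⟨hsum.tsum_pos (fun n => (engel_term_pos g n).le) 0 (engel_term_pos g 0),
    (hsum.tsum_le_tsum (engel_term_le g) hgeom.summable).trans_eq hgeom.tsum_eq⟩

lemma exists_abs_le_lt_one {a : ℕ → ℝ} (ha : Tendsto a atTop (𝓝 0)) (h : ∀ n, |a n| < 1) :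
    ∃ c < 1, ∀ n, |a n| ≤ c := by
  obtain ⟨N, hN⟩ := eventually_atTop.1 <|
    (by simpa using ha.abs : Tendsto (fun n => |a n|) atTop (𝓝 0)).eventually_lt_const one_half_pos
  obtain ⟨m, -, hm⟩ :=
    (Finset.range (N + 1)).exists_max_image (fun n => |a n|) Finset.nonempty_range_add_one
  refine ⟨max (1 / 2) |a m|, max_lt one_half_lt_one (h m), fun n => ?_⟩
  rcases le_or_gt n N with hn | hn
  · exact (hm n (Finset.mem_range_succ_iff.2 hn)).trans (le_max_right _ _)
  · exact (hN n hn.le).le.trans (le_max_left _ _)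

section

variable {u r : ℕ → ℝ}

lemma rpred_eq_add (hr : ∀ n, r n = 1 - ∑ i ∈ Finset.range (n + 1), u i) (n : ℕ) :
    rpred r n = r n + u n := by
  cases n with
  | zero => simp [rpred, hr]
  | succ m =>
    rw [rpred, if_neg m.succ_ne_zero, Nat.add_sub_cancel, hr, hr, Finset.sum_range_succ _ (m + 1)]
    ring

lemma rpred_mem_Icc (hr : ∀ n, r n ∈ Icc 0 1) (n : ℕ) : rpred r n ∈ Icc 0 1 := by
  unfold rpred
  split_ifs
  exacts [right_mem_Icc.2 zero_le_one, hr _]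

lemma tendsto_tail_zero (hu : HasSum u 1) (hr : ∀ n, r n = 1 - ∑ i ∈ Finset.range (n + 1), u i) :
    Tendsto r atTop (𝓝 0) := by
  rw [funext hr, ← sub_self (1 : ℝ)]
  exact (hu.tendsto_sum_nat.comp (tendsto_add_atTop_nat 1)).const_sub 1

/-- `affineComp u r g k t = φ_{g 0} (φ_{g 1} (⋯ (φ_{g (k-1)} t)))` for `φ_n t = r n + u n * t`. -/
def affineComp (u r : ℕ → ℝ) (g : ℕ → ℕ) : ℕ → ℝ → ℝ
  | 0, t => t
  | k + 1, t => affineComp u r g k (r (g k) + u (g k) * t)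

lemma affineComp_eq (g : ℕ → ℕ) (k : ℕ) (t : ℝ) :
    affineComp u r g k t = ∑ j ∈ Finset.range k, r (g j) * ∏ i ∈ Finset.range j, u (g i)
      + (∏ i ∈ Finset.range k, u (g i)) * t := by
  induction k generalizing t with
  | zero => simp [affineComp]
  | succ k ih => rw [affineComp, ih, Finset.sum_range_succ, Finset.prod_range_succ]; ring

lemma affineComp_mem_Icc (hr : ∀ n, r n ∈ Icc 0 1) (hru : ∀ n, r n + u n ∈ Icc 0 1)
    (g : ℕ → ℕ) (k : ℕ) {t : ℝ} (ht : t ∈ Icc 0 1) : affineComp u r g k t ∈ Icc 0 1 := by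
  induction k generalizing t with
  | zero => exact ht
  | succ k ih =>
    apply ih
    simpa [smul_eq_mul, mul_comm] using
      (convex_Icc (0 : ℝ) 1).add_smul_sub_mem (hr (g k)) (hru (g k)) ht

variable {c : ℝ}

lemma abs_prod_le_pow (hc : ∀ n, |u n| ≤ c) (g : ℕ → ℕ) (k : ℕ) :
    |∏ i ∈ Finset.range k, u (g i)| ≤ c ^ k := by
  rw [Finset.abs_prod]
  calc _ ≤ ∏ _i ∈ Finset.range k, c :=
        Finset.prod_le_prod (fun i _ => abs_nonneg _) fun i _ => hc _
    _ = c ^ k := by rw [Finset.prod_const, Finset.card_range]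

lemma hasSum_fSeries (hr : ∀ n, |r n| ≤ 1) (hc : ∀ n, |u n| ≤ c) (hc1 : c < 1) (g : ℕ → ℕ) :
    HasSum (fun j => r (g j) * ∏ i ∈ Finset.range j, u (g i)) (fSeries u r g) := by
  have hc0 : 0 ≤ c := (abs_nonneg _).trans (hc 0)
  have hsum : Summable (fun j => r (g j) * ∏ i ∈ Finset.range j, u (g i)) := by
    refine Summable.of_norm_bounded (summable_geometric_of_lt_one hc0 hc1) fun j => ?_
    rw [Real.norm_eq_abs, abs_mul]
    exact (mul_le_of_le_one_left (abs_nonneg _) (hr _)).trans (abs_prod_le_pow hc g j)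
  convert hsum.hasSum using 1
  rw [hsum.tsum_eq_zero_add, fSeries]
  simp

lemma tendsto_affineComp (hr : ∀ n, |r n| ≤ 1) (hc : ∀ n, |u n| ≤ c) (hc1 : c < 1)
    (g : ℕ → ℕ) {t : ℕ → ℝ} (ht : ∀ k, |t k| ≤ 1) :
    Tendsto (fun k => affineComp u r g k (t k)) atTop (𝓝 (fSeries u r g)) := by
  have hc0 : 0 ≤ c := (abs_nonneg _).trans (hc 0)
  have hrem : Tendsto (fun k => (∏ i ∈ Finset.range k, u (g i)) * t k) atTop (𝓝 0) := by
    refine squeeze_zero_norm (fun k => ?_) (tendsto_pow_atTop_nhds_zero_of_lt_one hc0 hc1)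
    rw [Real.norm_eq_abs, abs_mul]
    exact (mul_le_of_le_one_right (abs_nonneg _) (ht k)).trans (abs_prod_le_pow hc g k)
  simpa only [affineComp_eq, add_zero] using
    (hasSum_fSeries hr hc hc1 g).tendsto_sum_nat.add hrem

lemma fSeries_mem_Icc (hr : ∀ n, r n ∈ Icc 0 1) (hru : ∀ n, r n + u n ∈ Icc 0 1)
    (hc : ∀ n, |u n| ≤ c) (hc1 : c < 1) (g : ℕ → ℕ) : fSeries u r g ∈ Icc 0 1 := by
  have hr_abs (n : ℕ) : |r n| ≤ 1 := (abs_of_nonneg (hr n).1).trans_le (hr n).2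
  refine isClosed_Icc.mem_of_tendsto
    (tendsto_affineComp hr_abs hc hc1 g (t := fun _ => 0) fun _ => by simp) ?_
  exact Eventually.of_forall fun k => affineComp_mem_Icc hr hru g k (left_mem_Icc.2 zero_le_one)

lemma exists_lt_le_rpred (hr0 : Tendsto r atTop (𝓝 0)) {y : ℝ} (hy : y ∈ Ioc 0 1) :
    ∃ n, r n < y ∧ y ≤ rpred r n := by
  classical
  have hex : ∃ n, r n < y := (hr0.eventually_lt_const hy.1).exists
  refine ⟨Nat.find hex, Nat.find_spec hex, ?_⟩
  rcases h : Nat.find hex with _ | m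
  · simpa [rpred] using hy.2
  · simpa [rpred] using Nat.find_min hex (h ▸ Nat.lt_succ_self m)

lemma exists_eq_affine_of_mem_Ioc (hr0 : Tendsto r atTop (𝓝 0))
    (hrpred : ∀ n, rpred r n = r n + u n) {y : ℝ} (hy : y ∈ Ioc 0 1) : ∃ n, ∃ z ∈ Ioc (0 : ℝ) 1, y = r n + u n * z := by
  obtain ⟨n, hlt, hle⟩ := exists_lt_le_rpred hr0 hy
  rw [hrpred] at hle
  have hu : 0 < u n := by linarith
  refine ⟨n, (y - r n) / u n, ⟨div_pos (by linarith) hu, (div_le_one hu).2 (by linarith)⟩, ?_⟩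
  field_simp
  ring

lemma exists_fSeries_eq (hr0 : Tendsto r atTop (𝓝 0)) (hrpred : ∀ n, rpred r n = r n + u n)
    (hr : ∀ n, |r n| ≤ 1) (hc : ∀ n, |u n| ≤ c) (hc1 : c < 1) {y : ℝ} (hy : y ∈ Ioc 0 1) :
    ∃ g, fSeries u r g = y := by
  have hstep (z : Ioc (0 : ℝ) 1) : ∃ (n : ℕ) (w : Ioc (0 : ℝ) 1), (z : ℝ) = r n + u n * w := by
    obtain ⟨n, w, hw, hz⟩ := exists_eq_affine_of_mem_Ioc hr0 hrpred z.2
    exact ⟨n, ⟨w, hw⟩, hz⟩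
  choose digit next hnext using hstep
  let orbit (k : ℕ) : Ioc (0 : ℝ) 1 := next^[k] ⟨y, hy⟩
  have horbit (k : ℕ) : affineComp u r (digit ∘ orbit) k (orbit k) = y := by
    induction k with
    | zero => rfl
    | succ k ih =>
      rw [affineComp, ← ih, Function.comp_apply, hnext (orbit k)]
      simp only [orbit, Function.iterate_succ_apply']
  refine ⟨digit ∘ orbit, tendsto_nhds_unique
    (tendsto_affineComp hr hc hc1 _ fun k => abs_le.2 ⟨?_, (orbit k).2.2⟩) ?_⟩
  · linarith [(orbit k).2.1]
  · simp only [horbit, tendsto_const_nhds]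

end

theorem stmt6_general
    (u r : ℕ → ℝ)
    (hu_sum : HasSum u 1)
    (hu_abs : ∀ n, |u n| < 1)
    (hr : ∀ n, r n = 1 - ∑ i ∈ Finset.range (n + 1), u i)
    (hr01 : ∀ n, 0 < r n ∧ r n < 1)
    (G : ℝ → ℕ → ℕ)
    (hGuniq : ∀ x ∈ Set.Ioc (0:ℝ) 1, ∀ g : ℕ → ℕ, engelSum g = x → g = G x)
    (f : ℝ → ℝ)
    (hf : ∀ x ∈ Set.Ioc (0:ℝ) 1, f x = fSeries u r (G x))
    (hf0 : f 0 = 0) :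
    f '' Set.Icc (0:ℝ) 1 = Set.Icc (0:ℝ) 1 := by
  obtain ⟨c, hc1, hc⟩ := exists_abs_le_lt_one hu_sum.summable.tendsto_atTop_zero hu_abs
  have hr_Icc (n : ℕ) : r n ∈ Icc 0 1 := ⟨(hr01 n).1.le, (hr01 n).2.le⟩
  have hr_abs (n : ℕ) : |r n| ≤ 1 := (abs_of_pos (hr01 n).1).trans_le (hr01 n).2.le
  have hrpred := rpred_eq_add hr
  ext y
  constructor
  · rintro ⟨x, hx, rfl⟩
    rcases hx.1.eq_or_lt with rfl | hx0
    · rw [hf0]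
      exact left_mem_Icc.2 zero_le_one
    · rw [hf x ⟨hx0, hx.2⟩]
      exact fSeries_mem_Icc hr_Icc (fun n => hrpred n ▸ rpred_mem_Icc hr_Icc n) hc hc1 _
  · intro hy
    rcases hy.1.eq_or_lt with rfl | hy0
    · exact ⟨0, left_mem_Icc.2 zero_le_one, hf0⟩
    · obtain ⟨g, rfl⟩ :=
        exists_fSeries_eq (tendsto_tail_zero hu_sum hr) hrpred hr_abs hc hc1 ⟨hy0, hy.2⟩
      have hx := engelSum_mem_Ioc g
      exact ⟨engelSum g, Ioc_subset_Icc_self hx, by rw [hf _ hx, ← hGuniq _ hx g rfl]⟩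

/-- the range of f on [0,1] is exactly [0,1]. -/
theorem stmt6
    (u r : ℕ → ℝ)
    (hu_sum : HasSum u 1)
    (hu_abs : ∀ n, |u n| < 1)
    (hr : ∀ n, r n = 1 - ∑ i ∈ Finset.range (n + 1), u i)
    (hr01 : ∀ n, 0 < r n ∧ r n < 1)
    (G : ℝ → ℕ → ℕ)
    (hG : ∀ x ∈ Set.Ioc (0:ℝ) 1, engelSum (G x) = x)
    (hGuniq : ∀ x ∈ Set.Ioc (0:ℝ) 1, ∀ g : ℕ → ℕ, engelSum g = x → g = G x)
    (f : ℝ → ℝ)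
    (hf : ∀ x ∈ Set.Ioc (0:ℝ) 1, f x = fSeries u r (G x))
    (hf0 : f 0 = 0) :
    f '' Set.Icc (0:ℝ) 1 = Set.Icc (0:ℝ) 1 :=
  stmt6_general u r hu_sum hu_abs hr hr01 G hGuniq f hf hf0
end
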